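/- Let S be a band of topological groups. Then S is a T0 space if and only if S is a T1 space, if and only if S is a Hausdorff (T2) space; moreover, if S is Hausdorff then S is a regular space and a completely regular space. -/

import Mathlib

open Set TopologicalSpace

/-- The principal left ideal (with `a` adjoined) generated by `a`: `{a} ∪ {s*a : s ∈ S}`. -/
def leftIdeal {S : Type*} [Semigroup S] (a : S) : Set S :=
  insert a {x | ∃ s, x = s * a}

/-- The principal right ideal (with `a` adjoined) generated by `a`: `{a} ∪ {a*s : s ∈ S}`. -/
def rightIdeal {S : Type*} [Semigroup S] (a : S) : Set S :=
  insert a {x | ∃ s, x = a * s}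

/-- Green's relation ℋ on a semigroup. -/
def greenH {S : Type*} [Semigroup S] (a b : S) : Prop :=
  leftIdeal a = leftIdeal b ∧ rightIdeal a = rightIdeal b

/-- The ℋ-class of an element. -/
def HClass {S : Type*} [Semigroup S] (x : S) : Set S := {y | greenH y x}

/-- A semigroup is completely regular if every element is completely regular. -/
def CompletelyRegularSemigroup (S : Type*) [Semigroup S] : Prop :=
  ∀ a : S, ∃ x, a = a * x * a ∧ a * x = x * a

/-- Green's relation ℋ is a congruence. -/
def HIsCongruence (S : Type*) [Semigroup S] : Prop :=
  ∀ a b c : S, greenH a b → greenH (a * c) (b * c) ∧ greenH (c * a) (c * b)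

/-- A cryptogroup is a completely regular semigroup in which ℋ is a congruence. -/
def IsCryptogroup (S : Type*) [Semigroup S] : Prop :=
  CompletelyRegularSemigroup S ∧ HIsCongruence S

/-- In a cryptogroup every ℋ-class is a group; `idp x` (written `x⁰`) is the identity of the
ℋ-class of `x`, and `inv x` (written `x⁻¹`) is the inverse of `x` inside its ℋ-class. -/
structure CryptoOps (S : Type*) [Semigroup S] where
  idp : S → S
  inv : S → S
  idp_mem : ∀ x, greenH (idp x) x
  idp_mul : ∀ x y, greenH y x → idp x * y = y
  mul_idp : ∀ x y, greenH y x → y * idp x = y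
  inv_mem : ∀ x, greenH (inv x) x
  mul_inv : ∀ x, x * inv x = idp x
  inv_mul : ∀ x, inv x * x = idp x

/-- The set `E(S)` of idempotents of a semigroup. -/
def idemSet (S : Type*) [Semigroup S] : Set S := {e | e * e = e}

/-- `(xU)* = {y ∈ S : x⁻¹*y ∈ U and x⁰ = y⁰}`. -/
def lstar {S : Type*} [Semigroup S] (ops : CryptoOps S) (x : S) (U : Set S) : Set S :=
  {y | ops.inv x * y ∈ U ∧ ops.idp x = ops.idp y}

/-- `(Ux)* = {y ∈ S : y*x⁻¹ ∈ U and x⁰ = y⁰}`. -/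
def rstar {S : Type*} [Semigroup S] (ops : CryptoOps S) (U : Set S) (x : S) : Set S :=
  {y | y * ops.inv x ∈ U ∧ ops.idp x = ops.idp y}

/-- `(AB)* = ⋃_{a ∈ A} (aB)*`. -/
def setStar {S : Type*} [Semigroup S] (ops : CryptoOps S) (A B : Set S) : Set S :=
  ⋃ a ∈ A, lstar ops a B

/-- A full subcryptogroup: contains all idempotents, and closed under multiplication
and inversion. -/
def IsFullSubcryptogroup {S : Type*} [Semigroup S] (ops : CryptoOps S) (K : Set S) : Prop :=
  idemSet S ⊆ K ∧ (∀ x ∈ K, ∀ y ∈ K, x * y ∈ K) ∧ (∀ x ∈ K, ops.inv x ∈ K)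

/-!
The topology of a band of topological groups `S` comes from a uniform structure: the entourages
are `{(p, q) | p ℋ q, p⁻¹ q ∈ V}` for open `V ⊇ E(S)`. Symmetry uses continuity of inversion, and
composition uses continuity of multiplication at the idempotents `(e, e)`, since the idempotent
of an ℋ-class is unique. Every uniform space is completely regular, hence regular and R₁, and in
an R₁ space T₀ already implies Hausdorff.
-/

open Filter Topology
open scoped SetRel

section Green

variable {S : Type*} [Semigroup S]

theorem greenH_refl (a : S) : greenH a a := ⟨rfl, rfl⟩

theorem greenH.symm {a b : S} (h : greenH a b) : greenH b a := ⟨h.1.symm, h.2.symm⟩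

theorem greenH.trans {a b c : S} (h₁ : greenH a b) (h₂ : greenH b c) : greenH a c :=
  ⟨h₁.1.trans h₂.1, h₁.2.trans h₂.2⟩

theorem isClosed_HClass [TopologicalSpace S] (hopen : ∀ x : S, IsOpen (HClass x)) (x : S) :
    IsClosed (HClass x) :=
  isOpen_compl_iff.mp <| isOpen_iff_forall_mem_open.mpr fun y hy =>
    ⟨HClass y, fun _ hz hzx => hy (hz.symm.trans hzx), hopen y, greenH_refl y⟩

end Green

namespace CryptoOps

variable {S : Type*} [Semigroup S] (ops : CryptoOps S)

section Algebra

theorem idp_mem_idemSet (a : S) : ops.idp a ∈ idemSet S :=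
  ops.idp_mul a _ (ops.idp_mem a)

theorem greenH_inv {x y : S} (hy : greenH y x) : greenH (ops.inv y) x :=
  (ops.inv_mem y).trans hy

theorem idp_eq_of_greenH {x y : S} (hy : greenH y x) : ops.idp y = ops.idp x := by
  have h₁ : ops.idp y * ops.idp x = ops.idp y := ops.mul_idp x _ ((ops.idp_mem y).trans hy)
  have h₂ : ops.idp y * ops.idp x = ops.idp x := ops.idp_mul y _ ((ops.idp_mem x).trans hy.symm)
  rw [← h₁, h₂]

theorem eq_idp_of_mem_idemSet {x e : S} (he : e ∈ idemSet S) (hex : greenH e x) :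
    e = ops.idp x := by
  have h : ops.idp e * e = ops.idp e := by rw [← ops.inv_mul e, mul_assoc, he]
  rw [← ops.idp_eq_of_greenH hex, ← h, ops.idp_mul e e (greenH_refl e)]

theorem eq_inv_of_mul_eq_idp {x z w : S} (hz : greenH z x) (hw : greenH w x)
    (h : z * w = ops.idp x) : w = ops.inv z :=
  calc w = ops.idp x * w := (ops.idp_mul x w hw).symm
    _ = ops.inv z * (z * w) := by rw [← mul_assoc, ops.inv_mul, ops.idp_eq_of_greenH hz]
    _ = ops.inv z := by rw [h, ops.mul_idp x _ (ops.greenH_inv hz)]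

theorem inv_inv {x : S} : ops.inv (ops.inv x) = x :=
  (ops.eq_inv_of_mul_eq_idp (ops.inv_mem x) (greenH_refl x) (ops.inv_mul x)).symm

theorem inv_eq_self_of_mem_idemSet {e : S} (he : e ∈ idemSet S) : ops.inv e = e :=
  (ops.eq_inv_of_mul_eq_idp (greenH_refl e) (greenH_refl e)
    (he.trans (ops.eq_idp_of_mem_idemSet he (greenH_refl e)))).symm

theorem inv_mul_mul_inv_mul {q r : S} (hqr : greenH r q) (p : S) :
    ops.inv p * q * (ops.inv q * r) = ops.inv p * r := by
  rw [mul_assoc, ← mul_assoc q, ops.mul_inv, ops.idp_mul q r hqr]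

variable (hc : HIsCongruence S)
include ops hc

theorem greenH_mul_self (x : S) : greenH (x * x) x := by
  have h := (hc (ops.idp x) x x (ops.idp_mem x)).1
  rw [ops.idp_mul x x (greenH_refl x)] at h
  exact h.symm

theorem greenH_mul {x y z : S} (hy : greenH y x) (hz : greenH z x) : greenH (y * z) x :=
  (hc y x z hy).1.trans (((hc z x x hz).2).trans (ops.greenH_mul_self hc x))

theorem greenH_inv_mul {p q : S} (hpq : greenH p q) : greenH (ops.inv p * q) p :=
  ops.greenH_mul hc (ops.inv_mem p) hpq.symm

theorem inv_mul_rev {x p q : S} (hp : greenH p x) (hq : greenH q x) :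
    ops.inv (p * q) = ops.inv q * ops.inv p := by
  refine (ops.eq_inv_of_mul_eq_idp (ops.greenH_mul hc hp hq)
    (ops.greenH_mul hc (ops.greenH_inv hq) (ops.greenH_inv hp)) ?_).symm
  calc p * q * (ops.inv q * ops.inv p) = p * (q * ops.inv q) * ops.inv p := by
        simp only [mul_assoc]
    _ = ops.idp x := by
        rw [ops.mul_inv, ops.mul_idp q p (hp.trans hq.symm), ops.mul_inv, ops.idp_eq_of_greenH hp]

theorem inv_inv_mul {p q : S} (hpq : greenH p q) :
    ops.inv (ops.inv p * q) = ops.inv q * p := by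
  rw [ops.inv_mul_rev hc (ops.inv_mem p) hpq.symm, ops.inv_inv]

end Algebra

section Uniformity

def entourage (V : Set S) : Set (S × S) :=
  {p | greenH p.1 p.2 ∧ ops.inv p.1 * p.2 ∈ V}

theorem mk_mem_entourage_self {V : Set S} (hV : idemSet S ⊆ V) (a : S) :
    (a, a) ∈ ops.entourage V :=
  ⟨greenH_refl a, by rw [ops.inv_mul]; exact hV (ops.idp_mem_idemSet a)⟩

theorem preimage_mk_entourage (x : S) (V : Set S) :
    Prod.mk x ⁻¹' ops.entourage V = HClass x ∩ (ops.inv x * ·) ⁻¹' V := by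
  ext y
  exact ⟨fun hy => ⟨hy.1.symm, hy.2⟩, fun hy => ⟨hy.1.symm, hy.2⟩⟩

variable [TopologicalSpace S]

def uniformityFilter : Filter (S × S) :=
  ⨅ (V : Set S) (_ : IsOpen V ∧ idemSet S ⊆ V), 𝓟 (ops.entourage V)

theorem uniformityFilter_hasBasis :
    ops.uniformityFilter.HasBasis (fun V : Set S => IsOpen V ∧ idemSet S ⊆ V) ops.entourage :=
  hasBasis_biInf_principal'
    (fun V hV W hW => ⟨V ∩ W, ⟨hV.1.inter hW.1, subset_inter hV.2 hW.2⟩,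
      fun _ hp => ⟨hp.1, hp.2.1⟩, fun _ hp => ⟨hp.1, hp.2.2⟩⟩)
    ⟨univ, isOpen_univ, subset_univ _⟩

theorem refl_mem_uniformityFilter {r : Set (S × S)} (hr : r ∈ ops.uniformityFilter) (a : S) :
    (a, a) ∈ r :=
  let ⟨_, hV, hsub⟩ := ops.uniformityFilter_hasBasis.mem_iff.mp hr
  hsub (ops.mk_mem_entourage_self hV.2 a)

theorem swap_preimage_mem_uniformityFilter (hc : HIsCongruence S) (hinv : Continuous ops.inv)
    {r : Set (S × S)} (hr : r ∈ ops.uniformityFilter) :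
    Prod.swap ⁻¹' r ∈ ops.uniformityFilter := by
  obtain ⟨V, ⟨hVo, hVE⟩, hsub⟩ := ops.uniformityFilter_hasBasis.mem_iff.mp hr
  have hE : idemSet S ⊆ V ∩ ops.inv ⁻¹' V := fun e he =>
    ⟨hVE he, by rw [mem_preimage, ops.inv_eq_self_of_mem_idemSet he]; exact hVE he⟩
  refine ops.uniformityFilter_hasBasis.mem_iff.mpr
    ⟨V ∩ ops.inv ⁻¹' V, ⟨hVo.inter (hVo.preimage hinv), hE⟩, ?_⟩
  rintro ⟨p, q⟩ ⟨hpq, -, hmem⟩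
  refine hsub ⟨hpq.symm, ?_⟩
  show ops.inv q * p ∈ V
  rwa [← ops.inv_inv_mul hc hpq]

variable [ContinuousMul S]

theorem nhds_eq_comap_uniformityFilter (hc : HIsCongruence S)
    (hopen : ∀ x : S, IsOpen (HClass x)) (x : S) :
    𝓝 x = comap (Prod.mk x) ops.uniformityFilter := by
  refine (nhds_basis_opens x).ext (ops.uniformityFilter_hasBasis.comap (Prod.mk x)) ?_ ?_
  · rintro o ⟨hxo, hoo⟩
    refine ⟨(HClass x)ᶜ ∪ (HClass x ∩ (x * ·) ⁻¹' o),
      ⟨(isClosed_HClass hopen x).isOpen_compl.union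
        ((hopen x).inter (hoo.preimage (continuous_const_mul x))), fun e he => ?_⟩, ?_⟩
    · by_cases hex : greenH e x
      · refine Or.inr ⟨hex, ?_⟩
        rw [mem_preimage, ops.eq_idp_of_mem_idemSet he hex, ops.mul_idp x x (greenH_refl x)]
        exact hxo
      · exact Or.inl hex
    · rintro y ⟨hxy, hy | ⟨-, hy⟩⟩
      · exact absurd (ops.greenH_inv_mul hc hxy) hy
      · rwa [mem_preimage, ← mul_assoc, ops.mul_inv, ops.idp_mul x y hxy.symm] at hy
  · rintro V ⟨hVo, hVE⟩
    refine ⟨_, ⟨ops.mk_mem_entourage_self hVE x, ?_⟩, subset_rfl⟩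
    rw [ops.preimage_mk_entourage]
    exact (hopen x).inter (hVo.preimage (continuous_const_mul _))

include ops in
theorem exists_isOpen_mul_mem (hopen : ∀ x : S, IsOpen (HClass x)) {V : Set S}
    (hVo : IsOpen V) (hVE : idemSet S ⊆ V) :
    ∃ W : Set S, (IsOpen W ∧ idemSet S ⊆ W) ∧
      ∀ a ∈ W, ∀ b ∈ W, greenH a b → a * b ∈ V := by
  have hloc : ∀ e ∈ idemSet S,
      ∃ U : Set S, IsOpen U ∧ e ∈ U ∧ ∀ a ∈ U, ∀ b ∈ U, a * b ∈ V := by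
    intro e he
    have hee : (e, e) ∈ (fun p : S × S => p.1 * p.2) ⁻¹' V := by
      rw [mem_preimage, he]; exact hVE he
    obtain ⟨A, B, hA, hB, heA, heB, hAB⟩ :=
      isOpen_prod_iff.mp (hVo.preimage continuous_mul) e e hee
    exact ⟨A ∩ B, hA.inter hB, ⟨heA, heB⟩, fun a ha b hb => hAB (mk_mem_prod ha.1 hb.2)⟩
  choose! U hUo hUe hUV using hloc
  refine ⟨⋃ e ∈ idemSet S, U e ∩ HClass e,
    ⟨isOpen_biUnion fun e he => (hUo e he).inter (hopen e),
      fun e he => mem_biUnion he ⟨hUe e he, greenH_refl e⟩⟩, ?_⟩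
  simp only [mem_iUnion]
  rintro a ⟨e₁, he₁, haU, hae₁⟩ b ⟨e₂, he₂, hbU, hbe₂⟩ hab
  have he : e₁ = e₂ :=
    (ops.eq_idp_of_mem_idemSet he₁ (hae₁.symm.trans (hab.trans hbe₂))).trans
      (ops.eq_idp_of_mem_idemSet he₂ (greenH_refl e₂)).symm
  exact hUV e₁ he₁ a haU b (he ▸ hbU)

theorem exists_comp_subset_of_mem_uniformityFilter (hc : HIsCongruence S)
    (hopen : ∀ x : S, IsOpen (HClass x)) {r : Set (S × S)} (hr : r ∈ ops.uniformityFilter) :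
    ∃ t ∈ ops.uniformityFilter, t ○ t ⊆ r := by
  obtain ⟨V, ⟨hVo, hVE⟩, hsub⟩ := ops.uniformityFilter_hasBasis.mem_iff.mp hr
  obtain ⟨W, hW, hmul⟩ := ops.exists_isOpen_mul_mem hopen hVo hVE
  refine ⟨ops.entourage W, ops.uniformityFilter_hasBasis.mem_of_mem hW, ?_⟩
  rintro ⟨p, r'⟩ ⟨q, ⟨hpq, hp⟩, ⟨hqr, hq⟩⟩
  refine hsub ⟨hpq.trans hqr, ?_⟩
  have h := hmul _ hp _ hq
    ((ops.greenH_inv_mul hc hpq).trans (hpq.trans (ops.greenH_inv_mul hc hqr).symm))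
  rwa [ops.inv_mul_mul_inv_mul hqr.symm] at h

theorem exists_uniformSpace_eq (hc : HIsCongruence S) (hinv : Continuous ops.inv)
    (hopen : ∀ x : S, IsOpen (HClass x)) :
    ∃ u : UniformSpace S, u.toTopologicalSpace = ‹TopologicalSpace S› := by
  let core : UniformSpace.Core S :=
    .mk' ops.uniformityFilter (fun _ => ops.refl_mem_uniformityFilter)
    (fun _ => ops.swap_preimage_mem_uniformityFilter hc hinv)
    (fun _ => ops.exists_comp_subset_of_mem_uniformityFilter hc hopen)
  exact ⟨{ toTopologicalSpace := ‹_›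
           uniformity := ops.uniformityFilter
           symm := core.symm
           comp := core.comp
           nhds_eq_comap_uniformity := ops.nhds_eq_comap_uniformityFilter hc hopen }, rfl⟩

end Uniformity

end CryptoOps

/-- For a band of topological groups `S`: `S` is T0 iff T1 iff Hausdorff; moreover a
Hausdorff such `S` is regular and completely regular. -/
theorem stmt10 {S : Type*} [Semigroup S] [TopologicalSpace S] [ContinuousMul S]
    (ops : CryptoOps S) (hcrypt : IsCryptogroup S)
    (hinv : Continuous ops.inv) (hopen : ∀ x : S, IsOpen (HClass x)) :
    (T0Space S ↔ T1Space S) ∧ (T1Space S ↔ T2Space S) ∧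
      (T2Space S → RegularSpace S ∧ CompletelyRegularSpace S) := by
  have hcr : CompletelyRegularSpace S :=
    .of_exists_uniformSpace (ops.exists_uniformSpace_eq hcrypt.2 hinv hopen)
  have hT2 : T0Space S → T2Space S := R1Space.t2Space_iff_t0Space.mpr
  exact ⟨⟨fun h => (hT2 h).t1Space, fun _ => inferInstance⟩,
    ⟨fun h => hT2 h.t0Space, fun _ => inferInstance⟩, fun _ => ⟨inferInstance, hcr⟩⟩
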